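/- arXiv:2409.08694 — 9 statements merged into one kernel-verified Lean document; each statement's English description precedes it below -/
import Mathlib

section
/- Let s ≥ 2, t ≥ 2 and m ≥ 1 be integers and let n = sm - 1. Then the family F = {X ⊆ [n] : |X| ≥ m-1} of all subsets of [n] of size at least m-1 is K_{s×t}-free. Consequently vex(n, K_{s×t}) ≥ Σ_{i=m-1}^{n} C(n,i). -/
open Finset

/-- The family `F` of subsets of `[n]` contains a copy of the complete `s`-partite
graph `K_{s×t}` (all parts of size `t`) in the Kneser cube: there are `s·t` pairwise
distinct members `A j i ∈ F` such that sets belonging to different groups `j ≠ j'`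
are disjoint. -/
def containsKst (n s t : ℕ) (F : Finset (Finset (Fin n))) : Prop :=
  ∃ A : Fin s → Fin t → Finset (Fin n),
    (∀ j i, A j i ∈ F) ∧
    Function.Injective (fun p : Fin s × Fin t => A p.1 p.2) ∧
    ∀ j j' : Fin s, j ≠ j' → ∀ i i' : Fin t, Disjoint (A j i) (A j' i')

/-- `vexKst n s t` : the maximum size of a `K_{s×t}`-free family of subsets of `[n]`. -/
noncomputable def vexKst (n s t : ℕ) : ℕ :=
  sSup {k | ∃ F : Finset (Finset (Fin n)), ¬ containsKst n s t F ∧ F.card = k}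

/-!
Take two distinct sets from each of the `s` parts of a copy of `K_{s×t}` inside
`{X ⊆ [n] : |X| ≥ k}`. Their union has at least `k + 1` elements, and the `s` unions are
pairwise disjoint, so `n ≥ s (k + 1)`. For `k = m - 1` this fails at `n = s m - 1`.
-/

lemma Finset.lt_card_union_of_ne {α : Type*} [DecidableEq α] {A B : Finset α} {k : ℕ}
    (hA : k ≤ #A) (hB : k ≤ #B) (hne : A ≠ B) : k < #(A ∪ B) := by
  by_contra! h
  exact hne <| (eq_of_subset_of_card_le subset_union_left (h.trans hA)).trans
    (eq_of_subset_of_card_le subset_union_right (h.trans hB)).symm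

lemma not_containsKst_of_lt_mul {n s t k : ℕ} (ht : 2 ≤ t) (hn : n < s * (k + 1)) :
    ¬ containsKst n s t {X | k ≤ #X} := by
  rintro ⟨A, hmem, hinj, hdisj⟩
  let i₀ : Fin t := ⟨0, by omega⟩
  let i₁ : Fin t := ⟨1, by omega⟩
  let B : Fin s → Finset (Fin n) := fun j => A j i₀ ∪ A j i₁
  have hB_card (j : Fin s) : k + 1 ≤ #(B j) := by
    have hne : A j i₀ ≠ A j i₁ := fun h => by
      simpa [i₀, i₁, Fin.ext_iff] using hinj (a₁ := (j, i₀)) (a₂ := (j, i₁)) h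
    exact lt_card_union_of_ne (mem_filter.mp (hmem j i₀)).2 (mem_filter.mp (hmem j i₁)).2 hne
  have hB_disj : ((univ : Finset (Fin s)) : Set (Fin s)).PairwiseDisjoint B :=
    fun j _ j' _ h => by
      simp only [B, disjoint_union_left, disjoint_union_right]
      exact ⟨⟨hdisj j j' h i₀ i₀, hdisj j j' h i₁ i₀⟩,
        ⟨hdisj j j' h i₀ i₁, hdisj j j' h i₁ i₁⟩⟩
  have : s * (k + 1) ≤ n :=
    calc s * (k + 1) = ∑ _j : Fin s, (k + 1) := by simp
      _ ≤ ∑ j, #(B j) := sum_le_sum fun j _ => hB_card j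
      _ = #(univ.biUnion B) := (card_biUnion hB_disj).symm
      _ ≤ n := (card_le_univ _).trans_eq (Fintype.card_fin n)
  omega

lemma card_filter_le_card_eq_sum_choose (α : Type*) [Fintype α] (k : ℕ) :
    #{X : Finset α | k ≤ #X} =
      ∑ i ∈ Icc k (Fintype.card α), (Fintype.card α).choose i := by
  rw [card_eq_sum_card_fiberwise (f := card) (t := Icc k (Fintype.card α))]
  · refine sum_congr rfl fun i hi => ?_
    calc _ = #(powersetCard i (univ : Finset α)) := congrArg card <| by
          ext X
          simp only [mem_filter, mem_univ, true_and, mem_powersetCard_univ, and_iff_right_iff_imp]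
          rintro rfl
          exact (mem_Icc.mp hi).1
      _ = _ := by rw [card_powersetCard, card_univ]
  · intro X hX
    simpa [mem_Icc] using ⟨(mem_filter.mp hX).2, card_le_univ X⟩

lemma card_le_vexKst {n s t : ℕ} {F : Finset (Finset (Fin n))} (hF : ¬ containsKst n s t F) :
    #F ≤ vexKst n s t :=
  le_csSup ⟨Fintype.card (Finset (Fin n)), by rintro _ ⟨G, -, rfl⟩; exact card_le_univ G⟩
    ⟨F, hF, rfl⟩

/-- for `n = sm - 1`, the family of all subsets of `[n]` of size at least
`m-1` is `K_{s×t}`-free, hence `vex(n, K_{s×t}) ≥ Σ_{i=m-1}^n C(n,i)`. -/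
theorem stmt0 (s t m n : ℕ) (hs : 2 ≤ s) (ht : 2 ≤ t) (hm : 1 ≤ m)
    (hn : n = s * m - 1) :
    ¬ containsKst n s t (univ.filter fun X : Finset (Fin n) => m - 1 ≤ X.card) ∧
      ∑ i ∈ Finset.Icc (m - 1) n, n.choose i ≤ vexKst n s t := by
  have hsm : 2 * 1 ≤ s * m := Nat.mul_le_mul hs hm
  have hfree : ¬ containsKst n s t {X | m - 1 ≤ #X} :=
    not_containsKst_of_lt_mul ht (by rw [Nat.sub_add_cancel hm]; omega)
  refine ⟨hfree, ?_⟩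
  simpa only [card_filter_le_card_eq_sum_choose, Fintype.card_fin] using card_le_vexKst hfree
end

section
/- Let s ≥ 3 and m ≥ s be integers and n = sm. For 1 ≤ i ≤ s-1 let F_i = {X ⊆ [n] : |X| = m - i and |X ∩ [s-1]| ≥ i}. Then the family S = {X ⊆ [n] : |X| ≥ m} ∪ F_1 ∪ ⋯ ∪ F_{s-1} is K_{s×2}-free. -/
/-!
Weight a set `X` by `|X| + |X ∩ P|`, where `P = [s-1]`. Every member of the family has weight at
least `m`, and weight is strictly monotone, so the union of the two distinct sets in a part of a
copy of `K_{s×2}` has weight at least `m + 1`. These `s` unions are pairwise disjoint, so their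
weights add up to at most `|[n]| + |P| = sm + s - 1 < s(m + 1)`.
-/

open Finset

section Weight

variable {α : Type*} [DecidableEq α] (P : Finset α)

def weight (X : Finset α) : ℕ := #X + #(X ∩ P)

variable {P}

theorem weight_lt_weight_of_ssubset {X Y : Finset α} (h : X ⊂ Y) : weight P X < weight P Y := by
  have hcard := card_lt_card h
  have hinter := card_le_card (inter_subset_inter_right (u := P) h.subset)
  unfold weight
  omega

theorem lt_weight_union_of_ne {m : ℕ} {X Y : Finset α} (hX : m ≤ weight P X)
    (hY : m ≤ weight P Y) (hXY : X ≠ Y) : m < weight P (X ∪ Y) := by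
  by_cases hYX : Y ⊆ X
  · have hY_ssubset : Y ⊂ X ∪ Y := by
      rw [union_eq_left.2 hYX]
      exact ssubset_of_subset_of_ne hYX hXY.symm
    exact hY.trans_lt (weight_lt_weight_of_ssubset hY_ssubset)
  · exact hX.trans_lt (weight_lt_weight_of_ssubset (left_lt_sup.2 hYX))

theorem sum_weight_le_of_pairwiseDisjoint [Fintype α] {ι : Type*} (t : Finset ι)
    (U : ι → Finset α) (hU : (t : Set ι).PairwiseDisjoint U) :
    ∑ j ∈ t, weight P (U j) ≤ Fintype.card α + #P := by
  have hUP : (t : Set ι).PairwiseDisjoint fun j => U j ∩ P :=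
    hU.mono fun j => inter_subset_left
  simp only [weight, sum_add_distrib, ← card_biUnion hU, ← card_biUnion hUP]
  exact add_le_add (card_le_univ _) (card_le_card (biUnion_subset.2 fun j _ => inter_subset_right))

end Weight

open scoped Classical in
theorem stmt4_general (s m : ℕ) (hs : 3 ≤ s) :
    ¬ containsKst (s * m) s 2
        (univ.filter fun X : Finset (Fin (s * m)) =>
          m ≤ X.card ∨
            ∃ i, 1 ≤ i ∧ i ≤ s - 1 ∧
              X.card = m - i ∧
                i ≤ (X ∩ univ.filter fun y : Fin (s * m) => (y : ℕ) < s - 1).card) := by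
  rintro ⟨A, hmem, hinj, hdisj⟩
  set P : Finset (Fin (s * m)) := univ.filter fun y => (y : ℕ) < s - 1
  have hA : ∀ j i, m ≤ weight P (A j i) := fun j i => by
    obtain ⟨-, h | ⟨i, -, -, hcard, hP⟩⟩ := mem_filter.1 (hmem j i) <;> unfold weight <;> omega
  have hU : ∀ j, m + 1 ≤ weight P (A j 0 ∪ A j 1) := fun j =>
    lt_weight_union_of_ne (hA j 0) (hA j 1) fun h => by
      simpa using hinj (a₁ := (j, 0)) (a₂ := (j, 1)) h
  have hUdisj :
      ((univ : Finset (Fin s)) : Set (Fin s)).PairwiseDisjoint fun j => A j 0 ∪ A j 1 :=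
    fun j _ j' _ hjj' => disjoint_union_left.2
      ⟨disjoint_union_right.2 ⟨hdisj j j' hjj' 0 0, hdisj j j' hjj' 0 1⟩,
        disjoint_union_right.2 ⟨hdisj j j' hjj' 1 0, hdisj j j' hjj' 1 1⟩⟩
  have hsum := (sum_le_sum fun j _ => hU j).trans
    (sum_weight_le_of_pairwiseDisjoint univ _ hUdisj)
  have hP : #P ≤ s - 1 := Fin.card_filter_val_lt.trans_le (min_le_right _ _)
  simp only [sum_const, card_univ, Fintype.card_fin, smul_eq_mul, Nat.mul_succ] at hsum
  omega

open scoped Classical in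
/-- for `n = sm`, the family consisting of all subsets of size at least `m`
together with, for `1 ≤ i ≤ s-1`, all subsets of size `m - i` containing at least `i`
elements of `[s-1]` (the first `s-1` elements of the ground set) is `K_{s×2}`-free. -/
theorem stmt4 (s m : ℕ) (hs : 3 ≤ s) (hm : s ≤ m) :
    ¬ containsKst (s * m) s 2
        (univ.filter fun X : Finset (Fin (s * m)) =>
          m ≤ X.card ∨
            ∃ i, 1 ≤ i ∧ i ≤ s - 1 ∧
              X.card = m - i ∧
                i ≤ (X ∩ univ.filter fun y : Fin (s * m) => (y : ℕ) < s - 1).card) :=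
  stmt4_general s m hs
end

section
/- Let s ≥ 3 be a fixed integer and n = sm. For 1 ≤ i ≤ s-1 let F_i = {X ⊆ [n] : |X| = m - i and |X ∩ [s-1]| ≥ i}. Then (|F_1| + |F_2| + ⋯ + |F_{s-1}|) / C(sm, m-1) tends to β_s as m → ∞, where β_s = ((s-1)/(s-2))·(1 - (1 - (s-2)/(s²-s))^{s-1}). -/
/-!
Splitting a set by its intersection with `A = [s-1]` gives
`|F_i| = ∑_{j ≥ i} C(s-1, j) C(sm-s+1, m-i-j)`. For `N ~ νm` and `K ~ κm` the ratio identities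
`C(N-1, K) / C(N, K) = (N-K)/N` and `C(N, K-1) / C(N, K) = K/(N-K+1)` give
`C(N-a, K-t) / C(N, K) → ((ν-κ)/ν)^a (κ/(ν-κ))^t`; with `N = sm`, `K = m-1` each term of the
normalized sum converges to `((s-1)/s)^(s-1) q^(i+j-1)`, `q = 1/(s-1)`. Summing the geometric
series in `i` and the binomial series in `j` gives
`((s-1)/s)^(s-1) ((1+q)^(s-1) - (1+q²)^(s-1)) / (1-q) = β_s`.
-/

open Finset Filter Topology

section Counting

variable {α : Type*} [Fintype α] [DecidableEq α]

theorem card_filter_card_eq_card_inter_eq (A : Finset α) {k j : ℕ} (hj : j ≤ k) :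
    #{X : Finset α | X.card = k ∧ (X ∩ A).card = j} =
      A.card.choose j * (Fintype.card α - A.card).choose (k - j) := by
  rw [← card_compl A, ← card_powersetCard, ← card_powersetCard, ← card_product]
  have split {B C : Finset α} (hBA : B ⊆ A) (hCA : Disjoint C A) :
      (B ∪ C) ∩ A = B ∧ (B ∪ C) \ A = C := by
    rw [union_inter_distrib_right, inter_eq_left.2 hBA, disjoint_iff_inter_eq_empty.1 hCA,
      union_sdiff_distrib, sdiff_eq_empty_iff_subset.2 hBA, sdiff_eq_self_of_disjoint hCA]
    simp
  refine card_nbij' (fun X => (X ∩ A, X \ A)) (fun P => P.1 ∪ P.2) ?_ ?_ ?_ ?_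
  · intro X hX
    simp only [coe_filter, mem_univ, true_and, Set.mem_ofPred_eq, mem_coe, mem_product,
      mem_powersetCard, subset_compl_iff_disjoint_right] at hX ⊢
    have := card_inter_add_card_sdiff X A
    exact ⟨⟨inter_subset_right, hX.2⟩, sdiff_disjoint, by omega⟩
  · rintro ⟨B, C⟩ hP
    simp only [mem_coe, mem_product, mem_powersetCard, subset_compl_iff_disjoint_right] at hP
    obtain ⟨⟨hBA, hB⟩, hCA, hC⟩ := hP
    simp only [coe_filter, mem_univ, true_and, Set.mem_ofPred_eq, (split hBA hCA).1,
      card_union_of_disjoint (disjoint_of_subset_left hBA hCA.symm)]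
    omega
  · intro X _
    exact sup_inf_sdiff X A
  · rintro ⟨B, C⟩ hP
    simp only [mem_coe, mem_product, mem_powersetCard, subset_compl_iff_disjoint_right] at hP
    simp only [split hP.1.1 hP.2.1]

theorem card_filter_card_eq_le_card_inter (A : Finset α) {k : ℕ} (i : ℕ) (hk : A.card ≤ k) :
    #{X : Finset α | X.card = k ∧ i ≤ (X ∩ A).card} =
      ∑ j ∈ Icc i A.card, A.card.choose j * (Fintype.card α - A.card).choose (k - j) := by
  rw [card_eq_sum_card_fiberwise (f := fun X => (X ∩ A).card) (t := Icc i A.card)]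
  · refine sum_congr rfl fun j hj => ?_
    rw [mem_Icc] at hj
    rw [filter_filter, ← card_filter_card_eq_card_inter_eq A (hj.2.trans hk)]
    congr 1
    refine filter_congr fun X _ => ?_
    constructor
    · rintro ⟨⟨hX, -⟩, hXA⟩; exact ⟨hX, hXA⟩
    · rintro ⟨hX, hXA⟩; exact ⟨⟨hX, hXA ▸ hj.1⟩, hXA⟩
  · intro X hX
    simp only [coe_filter, mem_univ, true_and, Set.mem_ofPred_eq, mem_coe, mem_Icc] at hX ⊢
    exact ⟨hX.2, card_le_card inter_subset_right⟩

end Counting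

section Asymptotics

lemma tendsto_natCast_mul_div (c : ℕ) : Tendsto (fun m => ((c * m : ℕ) : ℝ) / m) atTop (𝓝 c) := by
  refine tendsto_const_nhds.congr' ?_
  filter_upwards [eventually_gt_atTop 0] with m hm
  have : (m : ℝ) ≠ 0 := by positivity
  push_cast
  field_simp

lemma tendsto_natCast_tsub_div {f : ℕ → ℕ} {c : ℝ}
    (hf : Tendsto (fun m => (f m : ℝ) / m) atTop (𝓝 c)) (d : ℕ) :
    Tendsto (fun m => ((f m - d : ℕ) : ℝ) / m) atTop (𝓝 c) := by
  have hlow : Tendsto (fun m => (f m : ℝ) / m - d / m) atTop (𝓝 (c - 0)) :=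
    hf.sub (tendsto_const_div_atTop_nhds_zero_nat (d : ℝ))
  rw [sub_zero] at hlow
  refine tendsto_of_tendsto_of_tendsto_of_le_of_le hlow hf (fun m => ?_) (fun m => ?_)
  · have : (f m : ℝ) ≤ ((f m - d : ℕ) : ℝ) + d := by exact_mod_cast le_tsub_add
    rw [← sub_div]
    gcongr
    linarith
  · dsimp only
    gcongr
    exact Nat.sub_le _ _

variable {N K : ℕ → ℕ} {ν κ : ℝ}

lemma eventually_pos_and_lt_of_tendsto_div (hN : Tendsto (fun m => (N m : ℝ) / m) atTop (𝓝 ν))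
    (hK : Tendsto (fun m => (K m : ℝ) / m) atTop (𝓝 κ)) (hκ : 0 < κ) (hκν : κ < ν) :
    ∀ᶠ m in atTop, 0 < K m ∧ K m < N m := by
  filter_upwards [hK.eventually_const_lt hκ, hK.eventually_lt hN hκν] with m hK0 hKN
  constructor
  · by_contra! h
    simp_all
  · by_contra! h
    have : (N m : ℝ) / m ≤ K m / m := by gcongr
    linarith

lemma tendsto_choose_pred_left_div_choose (hN : Tendsto (fun m => (N m : ℝ) / m) atTop (𝓝 ν))
    (hK : Tendsto (fun m => (K m : ℝ) / m) atTop (𝓝 κ)) (hκ : 0 < κ) (hκν : κ < ν) :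
    Tendsto (fun m => ((N m - 1).choose (K m) : ℝ) / (N m).choose (K m)) atTop
      (𝓝 ((ν - κ) / ν)) := by
  refine ((hN.sub hK).div hN (by linarith)).congr' ?_
  filter_upwards [eventually_pos_and_lt_of_tendsto_div hN hK hκ hκν, eventually_gt_atTop 0]
    with m ⟨_, hKN⟩ hm
  have key := congrArg (Nat.cast : ℕ → ℝ) (Nat.choose_mul_succ_eq (N m - 1) (K m))
  rw [Nat.sub_add_cancel (by omega)] at key
  push_cast [Nat.cast_sub hKN.le] at key
  have hchoose : ((N m).choose (K m) : ℝ) ≠ 0 := by exact_mod_cast (Nat.choose_pos hKN.le).ne'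
  have hN0 : (N m : ℝ) ≠ 0 := by exact_mod_cast (by omega : N m ≠ 0)
  simp only [Pi.div_apply]
  rw [← sub_div, div_div_div_cancel_right₀ (by positivity), div_eq_div_iff hN0 hchoose]
  linear_combination -key

lemma tendsto_choose_pred_right_div_choose (hN : Tendsto (fun m => (N m : ℝ) / m) atTop (𝓝 ν))
    (hK : Tendsto (fun m => (K m : ℝ) / m) atTop (𝓝 κ)) (hκ : 0 < κ) (hκν : κ < ν) :
    Tendsto (fun m => ((N m).choose (K m - 1) : ℝ) / (N m).choose (K m)) atTop
      (𝓝 (κ / (ν - κ))) := by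
  have hden := (hN.sub hK).add (tendsto_const_div_atTop_nhds_zero_nat (1 : ℝ))
  rw [add_zero] at hden
  refine (hK.div hden (by linarith)).congr' ?_
  filter_upwards [eventually_pos_and_lt_of_tendsto_div hN hK hκ hκν, eventually_gt_atTop 0]
    with m ⟨hK0, hKN⟩ hm
  have key := congrArg (Nat.cast : ℕ → ℝ) (Nat.choose_succ_right_eq (N m) (K m - 1))
  rw [Nat.sub_add_cancel hK0] at key
  push_cast [Nat.cast_sub hK0, Nat.cast_sub (by omega : K m - 1 ≤ N m)] at key
  have hchoose : ((N m).choose (K m) : ℝ) ≠ 0 := by exact_mod_cast (Nat.choose_pos hKN.le).ne'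
  have hgap : (N m : ℝ) - K m + 1 ≠ 0 := by
    have : (K m : ℝ) < N m := by exact_mod_cast hKN
    linarith
  have hm0 : (m : ℝ) ≠ 0 := by positivity
  simp only [Pi.div_apply]
  rw [← sub_div, ← add_div, div_div_div_cancel_right₀ hm0, div_eq_div_iff hgap hchoose]
  linear_combination key

lemma tendsto_choose_tsub_right_div_choose (hN : Tendsto (fun m => (N m : ℝ) / m) atTop (𝓝 ν))
    (hK : Tendsto (fun m => (K m : ℝ) / m) atTop (𝓝 κ)) (hκ : 0 < κ) (hκν : κ < ν) (t : ℕ) :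
    Tendsto (fun m => ((N m).choose (K m - t) : ℝ) / (N m).choose (K m)) atTop
      (𝓝 ((κ / (ν - κ)) ^ t)) := by
  induction t generalizing K with
  | zero =>
    refine tendsto_const_nhds.congr' ?_
    filter_upwards [eventually_pos_and_lt_of_tendsto_div hN hK hκ hκν] with m ⟨_, hKN⟩
    rw [pow_zero, Nat.sub_zero, div_self]
    exact_mod_cast (Nat.choose_pos hKN.le).ne'
  | succ t ih =>
    rw [pow_succ]
    refine ((ih (tendsto_natCast_tsub_div hK 1)).mul
      (tendsto_choose_pred_right_div_choose hN hK hκ hκν)).congr' ?_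
    filter_upwards [eventually_pos_and_lt_of_tendsto_div hN hK hκ hκν] with m ⟨_, hKN⟩
    rw [div_mul_div_cancel₀ (by exact_mod_cast (Nat.choose_pos (by omega)).ne'), Nat.sub_sub,
      add_comm 1]

lemma tendsto_choose_tsub_tsub_div_choose (hN : Tendsto (fun m => (N m : ℝ) / m) atTop (𝓝 ν))
    (hK : Tendsto (fun m => (K m : ℝ) / m) atTop (𝓝 κ)) (hκ : 0 < κ) (hκν : κ < ν) (a t : ℕ) :
    Tendsto (fun m => ((N m - a).choose (K m - t) : ℝ) / (N m).choose (K m)) atTop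
      (𝓝 (((ν - κ) / ν) ^ a * (κ / (ν - κ)) ^ t)) := by
  induction a generalizing N with
  | zero => simpa using tendsto_choose_tsub_right_div_choose hN hK hκ hκν t
  | succ a ih =>
    rw [pow_succ, mul_right_comm]
    refine ((ih (tendsto_natCast_tsub_div hN 1)).mul
      (tendsto_choose_pred_left_div_choose hN hK hκ hκν)).congr' ?_
    filter_upwards [eventually_pos_and_lt_of_tendsto_div hN hK hκ hκν] with m ⟨_, hKN⟩
    rw [div_mul_div_cancel₀ (by exact_mod_cast (Nat.choose_pos (by omega)).ne'), Nat.sub_sub,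
      add_comm 1]

end Asymptotics

lemma sum_Icc_one_pow_add_sub_one (q : ℝ) (j : ℕ) :
    ∑ i ∈ Icc 1 j, q ^ (i + j - 1) = q ^ j * ∑ i ∈ range j, q ^ i := by
  rw [← Ico_add_one_right_eq_Icc, sum_Ico_eq_sum_range, mul_sum, add_tsub_cancel_right]
  refine sum_congr rfl fun i _ => ?_
  rw [← pow_add]
  congr 1
  omega

lemma one_sub_mul_sum_Icc_sum_Icc_choose_mul_pow (a : ℕ) (q : ℝ) :
    (1 - q) * ∑ i ∈ Icc 1 a, ∑ j ∈ Icc i a, (a.choose j : ℝ) * q ^ (i + j - 1) =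
      (1 + q) ^ a - (1 + q ^ 2) ^ a := by
  have hswap : ∑ i ∈ Icc 1 a, ∑ j ∈ Icc i a, (a.choose j : ℝ) * q ^ (i + j - 1) =
      ∑ j ∈ range (a + 1), (a.choose j : ℝ) * ∑ i ∈ Icc 1 j, q ^ (i + j - 1) := by
    simp_rw [mul_sum]
    refine sum_comm' fun i j => ?_
    simp only [mem_Icc, mem_range]
    omega
  rw [hswap, mul_sum, add_comm 1 q, add_comm 1 (q ^ 2), add_pow, add_pow, ← sum_sub_distrib]
  refine sum_congr rfl fun j _ => ?_
  rw [sum_Icc_one_pow_add_sub_one, mul_left_comm, mul_left_comm (1 - q), mul_neg_geom_sum]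
  ring

lemma sum_Icc_sum_Icc_choose_mul_pow_eq_beta (s : ℕ) (hs : 3 ≤ s) :
    ∑ i ∈ Icc 1 (s - 1), ∑ j ∈ Icc i (s - 1), ((s - 1).choose j : ℝ) *
        ((((s : ℝ) - 1) / s) ^ (s - 1) * (1 / ((s : ℝ) - 1)) ^ (i + j - 1)) =
      ((s : ℝ) - 1) / ((s : ℝ) - 2) * (1 - (1 - ((s : ℝ) - 2) / ((s : ℝ) ^ 2 - s)) ^ (s - 1)) := by
  have hs' : (3 : ℝ) ≤ s := by exact_mod_cast hs
  have hs1 : (s : ℝ) - 1 ≠ 0 := by linarith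
  have hs2 : (s : ℝ) - 2 ≠ 0 := by linarith
  set q : ℝ := 1 / ((s : ℝ) - 1)
  set c : ℝ := ((s : ℝ) - 1) / s
  have hq : 1 - q = ((s : ℝ) - 2) / ((s : ℝ) - 1) := by simp only [q]; field_simp; ring
  have hc₁ : c * (1 + q) = 1 := by simp only [c, q]; field_simp; ring
  have hc₂ : c * (1 + q ^ 2) = 1 - ((s : ℝ) - 2) / ((s : ℝ) ^ 2 - s) := by
    have : (s : ℝ) ^ 2 - s ≠ 0 := by nlinarith
    simp only [c, q]
    field_simp
    ring
  have hsum := one_sub_mul_sum_Icc_sum_Icc_choose_mul_pow (s - 1) q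
  rw [hq, mul_comm, ← eq_div_iff (div_ne_zero hs2 hs1)] at hsum
  simp_rw [mul_left_comm _ (c ^ (s - 1)), ← mul_sum]
  rw [hsum, mul_div_assoc', mul_sub, ← mul_pow, ← mul_pow, hc₁, hc₂, one_pow,
    div_div_eq_mul_div]
  ring

/-- for fixed `s ≥ 3` and `n = sm`, with
`F_i = {X ⊆ [n] : |X| = m - i and |X ∩ [s-1]| ≥ i}` for `1 ≤ i ≤ s-1`,
the ratio `(|F_1| + ⋯ + |F_{s-1}|) / C(sm, m-1)` tends to
`β_s = ((s-1)/(s-2))·(1 - (1 - (s-2)/(s²-s))^{s-1})` as `m → ∞`. -/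
theorem stmt5 (s : ℕ) (hs : 3 ≤ s) :
    Filter.Tendsto
      (fun m : ℕ =>
        (∑ i ∈ Finset.Icc 1 (s - 1),
            ((univ.filter fun X : Finset (Fin (s * m)) =>
                X.card = m - i ∧
                  i ≤ (X ∩ univ.filter fun y : Fin (s * m) => (y : ℕ) < s - 1).card).card : ℝ)) /
          ((s * m).choose (m - 1) : ℝ))
      Filter.atTop
      (nhds (((s : ℝ) - 1) / ((s : ℝ) - 2) *
        (1 - (1 - ((s : ℝ) - 2) / ((s : ℝ) ^ 2 - s)) ^ (s - 1)))) := by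
  have hlim (t : ℕ) := tendsto_choose_tsub_tsub_div_choose (tendsto_natCast_mul_div s)
    (by simpa using tendsto_natCast_tsub_div (tendsto_natCast_mul_div 1) 1) one_pos
    (by exact_mod_cast (by omega : 1 < s)) (s - 1) t
  rw [← sum_Icc_sum_Icc_choose_mul_pow_eq_beta s hs]
  refine (tendsto_finsetSum _ fun i _ => tendsto_finsetSum _ fun j _ =>
    (hlim (i + j - 1)).const_mul ((s - 1).choose j : ℝ)).congr' ?_
  filter_upwards [eventually_ge_atTop (2 * s)] with m hm
  have hA : #{y : Fin (s * m) | (y : ℕ) < s - 1} = s - 1 := by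
    rw [Fin.card_filter_val_lt, min_eq_right]
    exact (Nat.sub_le s 1).trans (Nat.le_mul_of_pos_right s (by omega))
  rw [sum_div]
  refine sum_congr rfl fun i hi => ?_
  rw [mem_Icc] at hi
  rw [card_filter_card_eq_le_card_inter _ i (by rw [hA]; omega), hA, Fintype.card_fin]
  push_cast
  rw [sum_div]
  refine sum_congr rfl fun j _ => ?_
  rw [mul_div_assoc, show m - i - j = m - 1 - (i + j - 1) by omega]
end

section
/- Let s ≥ 3 be a fixed integer and set β_s = ((s-1)/(s-2))·(1 - (1 - (s-2)/(s²-s))^{s-1}). Then for every ε > 0 there exists m_0 such that for all m ≥ m_0, with n = sm, one has 2^n - vex(n, K_{s×2}) ≤ Σ_{i=0}^{m-1} C(n,i) - (β_s - ε)·C(n, m-1). -/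
open Finset

/-!
Fix a set `T` of `s - 1` points and give a set `Z` the weight `|Z| + |Z ∩ T|`. The family of
sets of weight at least `m` is `K_{s×2}`-free: the union of the two distinct sets of a part
strictly contains one of them, so its weight is at least `m + 1`, while the `s` unions are
pairwise disjoint and therefore have total weight at most `sm + (s - 1)`.

Besides all sets of size at least `m`, this family contains the sets of size `m - 1 - i` meeting
`T` in `k > i` points. There are `C(s-1, k) C(sm-s+1, m-1-i-k)` of them, asymptotically
`C(s-1, k) ((s-1)/s)^(s-1) (s-1)^(-(i+k)) C(sm, m-1)`; summing the geometric series in `i` and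
then the binomial series in `k` gives `β_s C(sm, m-1)`.
-/

open Finset Filter Topology

namespace KneserCube

section Weight

variable {α : Type*} [DecidableEq α]

def weight (T Z : Finset α) : ℕ := #Z + #(Z ∩ T)

lemma weight_lt_weight_of_ssubset {T Z W : Finset α} (h : Z ⊂ W) : weight T Z < weight T W :=
  add_lt_add_of_lt_of_le (card_lt_card h) (card_le_card (inter_subset_inter_right h.subset))

lemma succ_le_weight_union {T A B : Finset α} {m : ℕ} (hAB : A ≠ B)
    (hA : m ≤ weight T A) (hB : m ≤ weight T B) : m + 1 ≤ weight T (A ∪ B) := by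
  rcases left_or_right_lt_sup hAB with h | h
  · exact hA.trans_lt (weight_lt_weight_of_ssubset h)
  · exact hB.trans_lt (weight_lt_weight_of_ssubset h)

variable [Fintype α]

lemma sum_weight_le {ι : Type*} {T : Finset α} {I : Finset ι} {U : ι → Finset α}
    (hU : (I : Set ι).PairwiseDisjoint U) :
    ∑ j ∈ I, weight T (U j) ≤ Fintype.card α + #T := by
  have hUT : (I : Set ι).PairwiseDisjoint (fun j => U j ∩ T) :=
    hU.mono fun j => inter_subset_left
  simp only [weight, sum_add_distrib]
  rw [← card_biUnion hU, ← card_biUnion hUT]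
  exact add_le_add (card_le_univ _)
    (card_le_card (biUnion_subset.mpr fun j _ => inter_subset_right))

def heavyFamily (T : Finset α) (m : ℕ) : Finset (Finset α) := {Z | m ≤ weight T Z}

lemma card_filter_card_eq_and_card_inter_eq (T : Finset α) {c k : ℕ} (hk : k ≤ c) :
    #{Z : Finset α | #Z = c ∧ #(Z ∩ T) = k} =
      (#T).choose k * (Fintype.card α - #T).choose (c - k) := by
  rw [← card_compl, ← card_powersetCard, ← card_powersetCard, ← card_product]
  refine card_nbij' (fun Z => (Z ∩ T, Z \ T)) (fun p => p.1 ∪ p.2) ?_ ?_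
    (fun Z _ => sup_inf_sdiff Z T) ?_
  · intro Z hZ
    simp only [mem_coe, mem_filter, mem_univ, true_and, mem_product, mem_powersetCard] at hZ ⊢
    refine ⟨⟨inter_subset_right, hZ.2⟩, fun x hx => mem_compl.mpr (mem_sdiff.mp hx).2, ?_⟩
    have := card_sdiff_add_card_inter Z T
    omega
  all_goals
    rintro ⟨A, B⟩ hp
    simp only [mem_coe, mem_product, mem_powersetCard] at hp
    obtain ⟨⟨hAT, hA⟩, hBT, hB⟩ := hp
    have hBT : Disjoint B T := Finset.disjoint_of_subset_left hBT disjoint_compl_left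
    have hinter : (A ∪ B) ∩ T = A := by
      rw [union_inter_distrib_right, inter_eq_left.mpr hAT, disjoint_iff_inter_eq_empty.mp hBT,
        union_empty]
  · simp only [mem_coe, mem_filter, mem_univ, true_and]
    rw [card_union_of_disjoint (disjoint_of_subset_left hAT hBT.symm), hinter]
    omega
  · rw [Prod.mk.injEq, hinter, union_sdiff_distrib, sdiff_eq_empty_iff_subset.mpr hAT, empty_union,
      hBT.sdiff_eq_left]
    exact ⟨rfl, rfl⟩

-- `2 * #T ≤ m` makes `i + k ≤ m - 1` in every summand, so no subtraction is truncated.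
lemma card_filter_card_lt_le_weight (T : Finset α) {m : ℕ} (hT : 2 * #T ≤ m) :
    #{Z : Finset α | #Z < m ∧ m ≤ weight T Z} =
      ∑ k ∈ range (#T + 1), ∑ i ∈ range k,
        (#T).choose k * (Fintype.card α - #T).choose (m - 1 - (i + k)) := by
  rw [card_eq_sum_card_fiberwise (f := fun Z => #(Z ∩ T)) (t := range (#T + 1))
    fun Z _ => mem_range.mpr (Nat.lt_succ_of_le (card_le_card inter_subset_right))]
  refine sum_congr rfl fun k hk => ?_
  rw [card_eq_sum_card_fiberwise (f := fun Z => m - 1 - #Z) (t := range k)]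
  · refine sum_congr rfl fun i hi => ?_
    simp only [mem_range] at hk hi
    rw [← Nat.sub_sub, ← card_filter_card_eq_and_card_inter_eq T (by omega : k ≤ m - 1 - i)]
    congr 1
    ext Z
    simp only [filter_filter, mem_filter, mem_univ, true_and]
    unfold weight
    omega
  · intro Z hZ
    simp only [mem_coe, mem_filter, mem_univ, true_and, coe_range, Set.mem_Iio] at hZ ⊢
    unfold weight at hZ
    omega

lemma card_filter_card_lt_le_sum_choose (m : ℕ) :
    #{Z : Finset α | #Z < m} ≤ ∑ c ∈ range m, (Fintype.card α).choose c := by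
  calc #{Z : Finset α | #Z < m}
      ≤ #((range m).biUnion fun c => powersetCard c (univ : Finset α)) :=
        card_le_card fun Z hZ => by
          simp only [mem_filter, mem_univ, true_and] at hZ
          exact mem_biUnion.mpr ⟨#Z, mem_range.mpr hZ, mem_powersetCard_univ.mpr rfl⟩
    _ ≤ ∑ c ∈ range m, #(powersetCard c (univ : Finset α)) := card_biUnion_le
    _ = ∑ c ∈ range m, (Fintype.card α).choose c := by simp only [card_powersetCard, card_univ]

lemma two_pow_add_le_card_heavyFamily_add (T : Finset α) {m : ℕ} (hT : 2 * #T ≤ m) :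
    2 ^ Fintype.card α + ∑ k ∈ range (#T + 1), ∑ i ∈ range k,
        (#T).choose k * (Fintype.card α - #T).choose (m - 1 - (i + k)) ≤
      #(heavyFamily T m) + ∑ c ∈ range m, (Fintype.card α).choose c := by
  have hheavy : #(heavyFamily T m) + #{Z | ¬ m ≤ weight T Z} = 2 ^ Fintype.card α := by
    rw [heavyFamily, card_filter_add_card_filter_not, card_univ, Fintype.card_finset]
  have hsmall := card_filter_add_card_filter_not (s := {Z | #Z < m}) (fun Z => m ≤ weight T Z)
  have hlight : ({Z | #Z < m} : Finset (Finset α)).filter (fun Z => ¬ m ≤ weight T Z) =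
      ({Z | ¬ m ≤ weight T Z} : Finset (Finset α)) := by
    ext Z
    simp only [mem_filter, mem_univ, true_and, and_iff_right_iff_imp, not_le]
    exact fun h => (Nat.le_add_right _ _).trans_lt h
  rw [hlight, filter_filter] at hsmall
  rw [← card_filter_card_lt_le_weight T hT]
  have := card_filter_card_lt_le_sum_choose (α := α) m
  omega

end Weight

theorem not_containsKst_heavyFamily {n s m : ℕ} {T : Finset (Fin n)}
    (h : n + #T < s * (m + 1)) : ¬ containsKst n s 2 (heavyFamily T m) := by
  rintro ⟨A, hmem, hinj, hdisj⟩
  have hheavy j i : m ≤ weight T (A j i) := (mem_filter.mp (hmem j i)).2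
  have hpair j : m + 1 ≤ weight T (A j 0 ∪ A j 1) :=
    succ_le_weight_union (fun h => by simpa using @hinj (j, 0) (j, 1) h) (hheavy j 0) (hheavy j 1)
  have hU : ((univ : Finset (Fin s)) : Set (Fin s)).PairwiseDisjoint (fun j => A j 0 ∪ A j 1) :=
    fun j _ j' _ hjj' => disjoint_union_left.mpr
      ⟨disjoint_union_right.mpr ⟨hdisj j j' hjj' 0 0, hdisj j j' hjj' 0 1⟩,
       disjoint_union_right.mpr ⟨hdisj j j' hjj' 1 0, hdisj j j' hjj' 1 1⟩⟩
  have := (sum_le_sum fun j _ => hpair j).trans (sum_weight_le (T := T) hU)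
  simp only [sum_const, card_univ, Fintype.card_fin, smul_eq_mul] at this
  omega

lemma card_le_vexKst {n s t : ℕ} {F : Finset (Finset (Fin n))} (hF : ¬ containsKst n s t F) :
    #F ≤ vexKst n s t :=
  le_csSup ⟨2 ^ n, by rintro k ⟨F', -, rfl⟩; simpa using card_le_univ F'⟩ ⟨F, hF, rfl⟩

lemma two_pow_add_le_vexKst_add {s m : ℕ} (hs : 0 < s) (hm : 2 * (s - 1) ≤ m) :
    2 ^ (s * m) + ∑ k ∈ range (s - 1 + 1), ∑ i ∈ range k,
        (s - 1).choose k * (s * m - (s - 1)).choose (m - 1 - (i + k)) ≤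
      vexKst (s * m) s 2 + ∑ c ∈ range m, (s * m).choose c := by
  obtain ⟨T, -, hT⟩ := exists_subset_card_eq (s := (univ : Finset (Fin (s * m)))) (n := s - 1)
    (by rw [card_univ, Fintype.card_fin]; nlinarith)
  have hfree : ¬ containsKst (s * m) s 2 (heavyFamily T m) :=
    not_containsKst_heavyFamily (by rw [hT, mul_add_one]; omega)
  have hcount := two_pow_add_le_card_heavyFamily_add T (m := m) (by rwa [hT])
  rw [hT, Fintype.card_fin] at hcount
  have := card_le_vexKst hfree
  omega

lemma tendsto_affine_div_affine (a b c d : ℝ) (hc : c ≠ 0) :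
    Tendsto (fun m : ℕ => (a * m + b) / (c * m + d)) atTop (𝓝 (a / c)) := by
  have hinv : Tendsto (fun m : ℕ => (m : ℝ)⁻¹) atTop (𝓝 0) :=
    tendsto_inv_atTop_nhds_zero_nat
  have hlim := ((hinv.const_mul b).const_add a).div ((hinv.const_mul d).const_add c) (by simpa)
  simp only [mul_zero, add_zero] at hlim
  refine hlim.congr' ?_
  filter_upwards [eventually_gt_atTop 0] with m hm
  have hm' : (m : ℝ) ≠ 0 := by positivity
  simp only [Pi.div_apply]
  field_simp

lemma tendsto_pow_of_eventually_eq_mul {f g : ℕ → ℕ → ℝ} {q : ℝ}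
    (h₀ : ∀ᶠ m in atTop, f 0 m = 1)
    (hstep : ∀ a, ∀ᶠ m in atTop, f (a + 1) m = f a m * g a m)
    (hg : ∀ a, Tendsto (g a) atTop (𝓝 q)) (a : ℕ) : Tendsto (f a) atTop (𝓝 (q ^ a)) := by
  induction a with
  | zero => simpa using tendsto_const_nhds.congr' (EventuallyEq.symm h₀)
  | succ a ih => simpa [pow_succ] using (ih.mul (hg a)).congr' (EventuallyEq.symm (hstep a))

lemma cast_choose_sub_one {N r : ℕ} (hN : 0 < N) (hr : r ≤ N) :
    ((N - 1).choose r : ℝ) = N.choose r * ((N : ℝ) - r) / N := by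
  obtain ⟨n, rfl⟩ := Nat.exists_eq_add_one_of_ne_zero hN.ne'
  have key : ((n.choose r * (n + 1) : ℕ) : ℝ) = ((n + 1).choose r * (n + 1 - r) : ℕ) :=
    congrArg _ (Nat.choose_mul_succ_eq n r)
  push_cast [Nat.cast_sub hr] at key ⊢
  field_simp
  linarith

lemma cast_choose_sub_one_right {N r : ℕ} (hr : 0 < r) (hrN : r ≤ N) :
    (N.choose (r - 1) : ℝ) = N.choose r * r / ((N : ℝ) - r + 1) := by
  obtain ⟨r, rfl⟩ := Nat.exists_eq_add_one_of_ne_zero hr.ne'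
  have key : ((N.choose (r + 1) * (r + 1) : ℕ) : ℝ) = (N.choose r * (N - r) : ℕ) :=
    congrArg _ (Nat.choose_succ_right_eq N r)
  have hpos : (0 : ℝ) < N - (r + 1 : ℕ) + 1 := by
    have : ((r + 1 : ℕ) : ℝ) ≤ N := by exact_mod_cast hrN
    linarith
  push_cast [Nat.cast_sub (by omega : r ≤ N)] at key hpos ⊢
  field_simp
  linarith

lemma choose_mul_sub_one_pos {s : ℕ} (hs : 0 < s) (m : ℕ) : 0 < (s * m).choose (m - 1) :=
  Nat.choose_pos ((Nat.sub_le m 1).trans (Nat.le_mul_of_pos_left m hs))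

lemma tendsto_choose_sub_div_choose {s : ℕ} (hs : 2 ≤ s) (a : ℕ) :
    Tendsto (fun m : ℕ => ((s * m - a).choose (m - 1) : ℝ) / (s * m).choose (m - 1)) atTop
      (𝓝 ((((s : ℝ) - 1) / s) ^ a)) := by
  refine tendsto_pow_of_eventually_eq_mul
    (f := fun a m => ((s * m - a).choose (m - 1) : ℝ) / (s * m).choose (m - 1))
    (g := fun a m => (((s : ℝ) - 1) * m + (1 - a)) / (s * m + -a)) ?_ (fun a => ?_)
    (fun a => tendsto_affine_div_affine _ _ _ _ (by positivity)) a
  · refine Eventually.of_forall fun m => ?_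
    have : ((s * m).choose (m - 1) : ℝ) ≠ 0 := by
      exact_mod_cast (choose_mul_sub_one_pos (by omega) m).ne'
    simp [this]
  · filter_upwards [eventually_ge_atTop (a + 1)] with m hm
    have hsm : 2 * m ≤ s * m := Nat.mul_le_mul_right m hs
    rw [← Nat.sub_sub, cast_choose_sub_one (by omega) (by omega)]
    push_cast [Nat.cast_sub (by omega : a ≤ s * m), Nat.cast_sub (by omega : 1 ≤ m)]
    ring

lemma tendsto_choose_sub_sub_div_choose_sub {s : ℕ} (hs : 2 ≤ s) (a j : ℕ) :
    Tendsto (fun m : ℕ => ((s * m - a).choose (m - 1 - j) : ℝ) / (s * m - a).choose (m - 1))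
      atTop (𝓝 ((1 / ((s : ℝ) - 1)) ^ j)) := by
  have hs' : (s : ℝ) - 1 ≠ 0 := by
    have : (2 : ℝ) ≤ s := by exact_mod_cast hs
    linarith
  refine tendsto_pow_of_eventually_eq_mul
    (f := fun j m => ((s * m - a).choose (m - 1 - j) : ℝ) / (s * m - a).choose (m - 1))
    (g := fun j m => (1 * m + (-1 - j)) / (((s : ℝ) - 1) * m + (2 + j - a))) ?_ (fun j => ?_)
    (fun j => tendsto_affine_div_affine _ _ _ _ hs') j
  · filter_upwards [eventually_ge_atTop a] with m hm
    have hsm : 2 * m ≤ s * m := Nat.mul_le_mul_right m hs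
    have : ((s * m - a).choose (m - 1) : ℝ) ≠ 0 := by
      exact_mod_cast (Nat.choose_pos (by omega)).ne'
    simp [this]
  · filter_upwards [eventually_ge_atTop (a + j + 2)] with m hm
    have hsm : 2 * m ≤ s * m := Nat.mul_le_mul_right m hs
    rw [← Nat.sub_sub, cast_choose_sub_one_right (by omega) (by omega)]
    push_cast [Nat.cast_sub (by omega : a ≤ s * m), Nat.cast_sub (by omega : 1 ≤ m),
      Nat.cast_sub (by omega : j ≤ m - 1)]
    ring

lemma tendsto_choose_sub_sub_div_choose {s : ℕ} (hs : 2 ≤ s) (a j : ℕ) :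
    Tendsto (fun m : ℕ => ((s * m - a).choose (m - 1 - j) : ℝ) / (s * m).choose (m - 1))
      atTop (𝓝 ((((s : ℝ) - 1) / s) ^ a * (1 / ((s : ℝ) - 1)) ^ j)) := by
  rw [mul_comm]
  refine ((tendsto_choose_sub_sub_div_choose_sub hs a j).mul
    (tendsto_choose_sub_div_choose hs a)).congr' ?_
  filter_upwards [eventually_ge_atTop a] with m hm
  have hsm : 2 * m ≤ s * m := Nat.mul_le_mul_right m hs
  have : ((s * m - a).choose (m - 1) : ℝ) ≠ 0 := by
    exact_mod_cast (Nat.choose_pos (by omega)).ne'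
  exact div_mul_div_cancel₀ this

lemma sum_range_sum_range_choose_mul_pow (N : ℕ) (c : ℝ) {u : ℝ} (hu : u ≠ 1) :
    ∑ k ∈ range (N + 1), ∑ i ∈ range k, (N.choose k : ℝ) * (c ^ N * u ^ (i + k)) =
      ((c * (u ^ 2 + 1)) ^ N - (c * (u + 1)) ^ N) / (u - 1) := by
  have binomial (v : ℝ) :
      (c * (v + 1)) ^ N = ∑ k ∈ range (N + 1), (N.choose k : ℝ) * (c ^ N * v ^ k) := by
    rw [mul_pow, add_pow, mul_sum]
    refine sum_congr rfl fun k _ => ?_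
    ring
  have hu' : u - 1 ≠ 0 := sub_ne_zero.mpr hu
  rw [binomial, binomial, ← sum_sub_distrib, sum_div]
  refine sum_congr rfl fun k _ => ?_
  simp_rw [pow_add, ← mul_assoc, ← sum_mul, ← mul_sum, geom_sum_eq hu]
  field_simp
  ring

noncomputable def beta (s : ℕ) : ℝ :=
  ((s : ℝ) - 1) / ((s : ℝ) - 2) * (1 - (1 - ((s : ℝ) - 2) / ((s : ℝ) ^ 2 - s)) ^ (s - 1))

lemma sum_choose_mul_pow_eq_beta {s : ℕ} (hs : 3 ≤ s) :
    ∑ k ∈ range (s - 1 + 1), ∑ i ∈ range k,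
        ((s - 1).choose k : ℝ) *
          ((((s : ℝ) - 1) / s) ^ (s - 1) * (1 / ((s : ℝ) - 1)) ^ (i + k)) =
      beta s := by
  have hs' : (3 : ℝ) ≤ s := by exact_mod_cast hs
  have hs0 : (s : ℝ) ≠ 0 := by linarith
  have hs1 : (s : ℝ) - 1 ≠ 0 := by linarith
  have hs2 : (s : ℝ) - 2 ≠ 0 := by linarith
  have hu : 1 / ((s : ℝ) - 1) ≠ 1 := by
    rw [Ne, div_eq_one_iff_eq (by linarith)]
    linarith
  rw [beta, sum_range_sum_range_choose_mul_pow _ _ hu]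
  have hlin : ((s : ℝ) - 1) / s * (1 / ((s : ℝ) - 1) + 1) = 1 := by
    field_simp
    ring
  have hquad : ((s : ℝ) - 1) / s * ((1 / ((s : ℝ) - 1)) ^ 2 + 1) =
      1 - ((s : ℝ) - 2) / ((s : ℝ) ^ 2 - s) := by
    have : (s : ℝ) ^ 2 - s ≠ 0 := by nlinarith
    field_simp
    ring
  rw [hlin, hquad, one_pow]
  generalize (1 - ((s : ℝ) - 2) / ((s : ℝ) ^ 2 - s)) ^ (s - 1) = B
  have h1u : 1 / ((s : ℝ) - 1) - 1 = -(((s : ℝ) - 2) / ((s : ℝ) - 1)) := by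
    field_simp
    ring
  rw [h1u]
  field_simp
  ring

lemma tendsto_sum_choose_div_choose {s : ℕ} (hs : 3 ≤ s) :
    Tendsto (fun m : ℕ => ((∑ k ∈ range (s - 1 + 1), ∑ i ∈ range k,
        (s - 1).choose k * (s * m - (s - 1)).choose (m - 1 - (i + k)) : ℕ) : ℝ) /
          (s * m).choose (m - 1)) atTop
      (𝓝 (beta s)) := by
  rw [← sum_choose_mul_pow_eq_beta hs]
  simp only [Nat.cast_sum, Nat.cast_mul, sum_div, mul_div_assoc]
  refine tendsto_finsetSum _ fun k _ => tendsto_finsetSum _ fun i _ => ?_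
  exact (tendsto_choose_sub_sub_div_choose (by omega) _ _).const_mul _

end KneserCube

/-- for fixed `s ≥ 3`, `n = sm` and
`β_s = ((s-1)/(s-2))·(1 - (1 - (s-2)/(s²-s))^{s-1})`, for every `ε > 0` and all
sufficiently large `m`,
`2^n - vex(n, K_{s×2}) ≤ Σ_{i=0}^{m-1} C(n,i) - (β_s - ε)·C(n, m-1)`. -/
theorem stmt6 (s : ℕ) (hs : 3 ≤ s) :
    ∀ ε : ℝ, 0 < ε → ∃ m₀ : ℕ, ∀ m : ℕ, m₀ ≤ m →
      (2 : ℝ) ^ (s * m) - (vexKst (s * m) s 2 : ℝ) ≤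
        (∑ i ∈ Finset.range m, ((s * m).choose i : ℝ)) -
          (((s : ℝ) - 1) / ((s : ℝ) - 2) *
              (1 - (1 - ((s : ℝ) - 2) / ((s : ℝ) ^ 2 - s)) ^ (s - 1)) - ε) *
            ((s * m).choose (m - 1) : ℝ) := by
  intro ε hε
  have hlim := KneserCube.tendsto_sum_choose_div_choose hs
  unfold KneserCube.beta at hlim
  obtain ⟨m₀, hm₀⟩ := eventually_atTop.mp
    ((hlim.eventually_const_le (sub_lt_self _ hε)).and (eventually_ge_atTop (2 * (s - 1))))
  refine ⟨m₀, fun m hm => ?_⟩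
  obtain ⟨hextra, hm⟩ := hm₀ m hm
  have hC : (0 : ℝ) < (s * m).choose (m - 1) := by
    exact_mod_cast KneserCube.choose_mul_sub_one_pos (by omega) m
  rw [le_div_iff₀ hC] at hextra
  have hbound := KneserCube.two_pow_add_le_vexKst_add (by omega) hm
  have hboundR : (2 : ℝ) ^ (s * m) + ((∑ k ∈ range (s - 1 + 1), ∑ i ∈ range k,
      (s - 1).choose k * (s * m - (s - 1)).choose (m - 1 - (i + k)) : ℕ) : ℝ) ≤
        vexKst (s * m) s 2 + ∑ c ∈ range m, ((s * m).choose c : ℝ) := by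
    exact_mod_cast hbound
  linarith
end

section
/- Let s ≥ 2, m ≥ 1 and n = sm, and let F be an upward-closed K_{s×2}-free family of subsets of [n]. Then the subfamily F^{m-1} = {A ∈ F : |A| = m-1} contains no s pairwise disjoint sets. -/
open Finset

/-- for `n = sm`, if `F` is an upward-closed `K_{s×2}`-free family of
subsets of `[n]`, then the subfamily of its `(m-1)`-element members contains no `s`
pairwise disjoint (distinct) sets. -/
theorem stmt9 (s m : ℕ) (hs : 2 ≤ s) (hm : 1 ≤ m)
    (F : Finset (Finset (Fin (s * m))))
    (hup : ∀ A ∈ F, ∀ B : Finset (Fin (s * m)), A ⊆ B → B ∈ F)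
    (hfree : ¬ containsKst (s * m) s 2 F) :
    ¬ ∃ A : Fin s → Finset (Fin (s * m)),
        Function.Injective A ∧
        (∀ j, A j ∈ F ∧ (A j).card = m - 1) ∧
        ∀ j j' : Fin s, j ≠ j' → Disjoint (A j) (A j') := by
  rintro ⟨A, hinj, hmem, hdisj⟩
  obtain ⟨m', rfl⟩ : ∃ m', m = m' + 1 := ⟨m - 1, by omega⟩
  have hcard : ∀ j, (A j).card = m' := fun j => by
    have := (hmem j).2; omega
  -- case m' = 0 : all A j are empty, contradicting injectivity
  rcases Nat.eq_zero_or_pos m' with rfl | hm' 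
  · have h0 : A ⟨0, by omega⟩ = A ⟨1, by omega⟩ := by
      have e0 := Finset.card_eq_zero.mp (hcard ⟨0, by omega⟩)
      have e1 := Finset.card_eq_zero.mp (hcard ⟨1, by omega⟩)
      rw [e0, e1]
    have := hinj h0
    simp [Fin.ext_iff] at this
  -- main case
  set U : Finset (Fin (s * (m' + 1))) := Finset.univ.biUnion A with hUdef
  have hAsub : ∀ j, A j ⊆ U := fun j a ha => Finset.mem_biUnion.mpr ⟨j, mem_univ _, ha⟩
  have hUcard : U.card = s * m' := by
    rw [hUdef, Finset.card_biUnion (fun j _ j' _ h => hdisj j j' h)]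
    simp [hcard, Finset.sum_const, mul_comm]
  have hcompl : Uᶜ.card = s := by
    rw [Finset.card_compl, hUcard, Fintype.card_fin]
    have : s * (m' + 1) = s * m' + s := by ring
    omega
  set x : Fin s → {a // a ∈ Uᶜ} := fun j => (Uᶜ.equivFinOfCardEq hcompl).symm j with hxdef
  have hxinj : Function.Injective x := fun a b h => by
    have := congrArg (Uᶜ.equivFinOfCardEq hcompl) h
    simpa [hxdef] using this
  have hxU : ∀ j, (x j : Fin (s * (m' + 1))) ∉ U := fun j =>
    Finset.mem_compl.mp (x j).2
  have hxA : ∀ j j', (x j : Fin (s * (m' + 1))) ∉ A j' := fun j j' h => hxU j (hAsub j' h)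
  set B : Fin s → Finset (Fin (s * (m' + 1))) := fun j => insert (x j : Fin _) (A j) with hBdef
  have hBcard : ∀ j, (B j).card = m' + 1 := fun j => by
    rw [hBdef]
    rw [Finset.card_insert_of_notMem (hxA j j), hcard]
  have hBdisj : ∀ j j', j ≠ j' → Disjoint (B j) (B j') := by
    intro j j' hne
    rw [Finset.disjoint_left]
    intro a ha ha'
    rw [hBdef, Finset.mem_insert] at ha ha'
    rcases ha with rfl | ha
    · rcases ha' with h | h
      · exact hne (hxinj (Subtype.ext h))
      · exact hxA j j' h
    · rcases ha' with rfl | ha'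
      · exact hxA j' j ha
      · exact (Finset.disjoint_left.mp (hdisj j j' hne)) ha ha'
  apply hfree
  refine ⟨fun j i => if i = 0 then A j else B j, ?_, ?_, ?_⟩
  · intro j i
    by_cases h : i = 0 <;> simp only [h, if_true, if_false, if_neg]
    · exact (hmem j).1
    · exact hup _ (hmem j).1 _ (Finset.subset_insert _ _)
  · rintro ⟨j, i⟩ ⟨j', i'⟩ h
    simp only at h
    fin_cases i <;> fin_cases i' <;>
      simp only [Fin.mk_zero, Fin.mk_one, Fin.isValue, reduceIte, one_ne_zero] at h ⊢
    · exact congrArg₂ Prod.mk (hinj h) rfl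
    · exfalso
      have := congrArg Finset.card h
      rw [hcard, hBcard] at this
      omega
    · exfalso
      have := congrArg Finset.card h
      rw [hcard, hBcard] at this
      omega
    · have hjj : j = j' := by
        by_contra hne
        have h1 : (x j : Fin _) ∈ B j := Finset.mem_insert_self _ _
        rw [h] at h1
        rw [hBdef, Finset.mem_insert] at h1
        rcases h1 with h1 | h1
        · exact hne (hxinj (Subtype.ext h1))
        · exact hxA j j' h1
      exact congrArg₂ Prod.mk hjj rfl
  · intro j j' hne i i'
    have hsub : ∀ (k : Fin s) (l : Fin 2), (if l = 0 then A k else B k) ⊆ B k := by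
      intro k l
      by_cases h : l = 0 <;> simp only [h, if_true, if_false, if_neg]
      · exact Finset.subset_insert _ _
      · exact Finset.Subset.refl _
    exact (hBdisj j j' hne).mono (hsub j i) (hsub j' i')
end

section
/- Let s ≥ 2, m ≥ 1 and n = sm. If F' is a family of (m-1)-element subsets of [n] containing no s pairwise disjoint sets, then the family F' ∪ {X ⊆ [n] : |X| ≥ m} is K_{s×2}-free. -/
open Finset

/-- Two distinct sets each of size at least `k` have union of size at least `k+1`. -/
lemma union_card_aux {α : Type*} [DecidableEq α] (A B : Finset α) (h : A ≠ B) (k : ℕ)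
    (hA : k ≤ A.card) (hB : k ≤ B.card) : k + 1 ≤ (A ∪ B).card := by
  by_cases hsub : B ⊆ A
  · have hss : B ⊂ A := hsub.ssubset_of_ne (Ne.symm h)
    have h1 : B.card < A.card := Finset.card_lt_card hss
    have h2 : A ∪ B = A := Finset.union_eq_left.mpr hsub
    rw [h2]
    omega
  · obtain ⟨x, hxB, hxA⟩ := Finset.not_subset.mp hsub
    have h1 : insert x A ⊆ A ∪ B := by
      intro y hy
      rcases Finset.mem_insert.mp hy with rfl | hy
      · exact Finset.mem_union_right _ hxB
      · exact Finset.mem_union_left _ hy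
    have h2 : (insert x A).card = A.card + 1 := Finset.card_insert_of_notMem hxA
    have h3 := Finset.card_le_card h1
    omega

/-- for `n = sm`, if `F'` is a family of `(m-1)`-element subsets of `[n]`
containing no `s` pairwise disjoint (distinct) sets, then
`F' ∪ {X ⊆ [n] : |X| ≥ m}` is `K_{s×2}`-free. -/
theorem stmt10 (s m : ℕ) (hs : 2 ≤ s) (hm : 1 ≤ m)
    (F' : Finset (Finset (Fin (s * m))))
    (hcard : ∀ X ∈ F', X.card = m - 1)
    (hKs : ¬ ∃ A : Fin s → Finset (Fin (s * m)),
        Function.Injective A ∧ (∀ j, A j ∈ F') ∧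
        ∀ j j' : Fin s, j ≠ j' → Disjoint (A j) (A j')) :
    ¬ containsKst (s * m) s 2
        (F' ∪ univ.filter fun X : Finset (Fin (s * m)) => m ≤ X.card) := by
  rintro ⟨A, hmem, hinj, hdis⟩
  classical
  have hAne : ∀ j, A j 0 ≠ A j 1 := by
    intro j h
    have := hinj (a₁ := (j, 0)) (a₂ := (j, 1)) h
    simp at this
  have hcard' : ∀ j i, m - 1 ≤ (A j i).card := by
    intro j i
    rcases Finset.mem_union.mp (hmem j i) with h | h
    · exact (hcard _ h).ge
    · have := (Finset.mem_filter.mp h).2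
      omega
  by_cases hall : ∀ j, ∃ i, A j i ∈ F'
  · choose i hi using hall
    refine hKs ⟨fun j => A j (i j), ?_, hi, fun j j' hne => hdis j j' hne _ _⟩
    intro j j' h
    have := hinj (a₁ := (j, i j)) (a₂ := (j', i j')) h
    exact (Prod.mk.injEq _ _ _ _ ▸ this).1
  · push_neg at hall
    obtain ⟨j0, hj0⟩ := hall
    have hbig : ∀ i, m ≤ (A j0 i).card := by
      intro i
      rcases Finset.mem_union.mp (hmem j0 i) with h | h
      · exact absurd h (hj0 i)
      · exact (Finset.mem_filter.mp h).2
    set g : Fin s → Finset (Fin (s * m)) := fun j => A j 0 ∪ A j 1 with hg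
    have hgdis : ∀ j ∈ (univ : Finset (Fin s)), ∀ j' ∈ univ, j ≠ j' →
        Disjoint (g j) (g j') := by
      intro j _ j' _ h
      simp only [hg, Finset.disjoint_union_left, Finset.disjoint_union_right]
      exact ⟨⟨hdis j j' h _ _, hdis j j' h _ _⟩, ⟨hdis j j' h _ _, hdis j j' h _ _⟩⟩
    have hsum : ∑ j, (g j).card ≤ s * m := by
      rw [← Finset.card_biUnion hgdis]
      calc (univ.biUnion g).card ≤ (univ : Finset (Fin (s * m))).card :=
            Finset.card_le_univ _
        _ = s * m := by simp
    have h1 : ∀ j, m ≤ (g j).card := by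
      intro j
      have h := union_card_aux (A j 0) (A j 1) (hAne j) (m - 1) (hcard' j 0) (hcard' j 1)
      have : (g j).card = (A j 0 ∪ A j 1).card := rfl
      omega
    have h2 : m + 1 ≤ (g j0).card :=
      union_card_aux _ _ (hAne j0) m (hbig 0) (hbig 1)
    have hsplit : ∑ j ∈ (univ : Finset (Fin s)).erase j0, (g j).card + (g j0).card
        = ∑ j, (g j).card := Finset.sum_erase_add _ _ (Finset.mem_univ j0)
    have h3 : ((univ : Finset (Fin s)).erase j0).card • m
        ≤ ∑ j ∈ (univ : Finset (Fin s)).erase j0, (g j).card :=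
      Finset.card_nsmul_le_sum _ _ _ (fun j _ => h1 j)
    have hcardu : ((univ : Finset (Fin s)).erase j0).card = s - 1 := by
      simp [Finset.card_erase_of_mem]
    rw [hcardu, smul_eq_mul] at h3
    have hmul : (s - 1) * m + m = s * m := by
      have : s - 1 + 1 = s := by omega
      calc (s - 1) * m + m = (s - 1 + 1) * m := by ring
        _ = s * m := by rw [this]
    omega
end

section
/- Let t ≥ 2, let F be a family of subsets of [n], and let H be the family of subsets of [n] not in F. Let G^i denote the family of i-element subsets of [n] that are good with respect to F, and H^{i-1} the family of (i-1)-element members of H. Then for every i with t - 2 ≤ i ≤ n, one has |G^i|·(i - t + 2) ≤ |H^{i-1}|·(n - i + 1). -/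
open Finset

/-- let `F` be a family of subsets of `[n]` and `H` its complementary
family. With `G^i` the family of good `i`-element subsets (at most `t - 2` of the sets
`X \ {x}`, `x ∈ X`, belong to `F`) and `H^{i-1}` the family of `(i-1)`-element members
of `H`, for every `t - 2 ≤ i ≤ n` we have
`|G^i|·(i - t + 2) ≤ |H^{i-1}|·(n - i + 1)`. -/
theorem stmt14 (n t : ℕ) (ht : 2 ≤ t)
    (F : Finset (Finset (Fin n)))
    (i : ℕ) (hi₁ : t - 2 ≤ i) (hi₂ : i ≤ n) :
    (univ.filter fun X : Finset (Fin n) =>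
        X.card = i ∧ (X.filter fun x => X.erase x ∈ F).card ≤ t - 2).card *
        (i + 2 - t) ≤
      (univ.filter fun X : Finset (Fin n) => X.card = i - 1 ∧ X ∉ F).card *
        (n - i + 1) := by
  set Gi := univ.filter fun X : Finset (Fin n) =>
      X.card = i ∧ (X.filter fun x => X.erase x ∈ F).card ≤ t - 2 with hGi
  set Hi := univ.filter fun X : Finset (Fin n) => X.card = i - 1 ∧ X ∉ F with hHi
  rcases Nat.eq_zero_or_pos i with hi0 | hip
  · subst hi0
    have : 2 - t = 0 := Nat.sub_eq_zero_of_le ht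
    simp [this]
  -- the set of pairs (X, x) with X good, x ∈ X, X.erase x ∉ F
  set S : Finset (Finset (Fin n) × Fin n) :=
    Gi.biUnion (fun X => (X.filter fun x => X.erase x ∉ F).image (fun x => (X, x))) with hS
  have hmemS : ∀ p : Finset (Fin n) × Fin n, p ∈ S →
      p.1 ∈ Gi ∧ p.2 ∈ p.1 ∧ p.1.erase p.2 ∉ F := by
    intro p hp
    simp only [hS, mem_biUnion, mem_image, mem_filter] at hp
    obtain ⟨X, hX, x, ⟨hx1, hx2⟩, rfl⟩ := hp
    exact ⟨hX, hx1, hx2⟩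
  -- lower bound : Gi.card * (i + 2 - t) ≤ S.card
  have hlow : Gi.card * (i + 2 - t) ≤ S.card := by
    rw [hS, card_biUnion]
    · have hbound : ∀ X ∈ Gi,
          (i + 2 - t) ≤ ((X.filter fun x => X.erase x ∉ F).image (fun x => (X, x))).card := by
        intro X hX
        rw [card_image_of_injective _ (fun a b h => (Prod.mk.injEq _ _ _ _).mp h |>.2)]
        simp only [hGi, mem_filter, mem_univ, true_and] at hX
        have hsplit := Finset.card_filter_add_card_filter_not
          (s := X) (p := fun x => X.erase x ∈ F)
        simp only [hX.1] at hsplit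
        omega
      calc Gi.card * (i + 2 - t) = ∑ _X ∈ Gi, (i + 2 - t) := by
            rw [sum_const, smul_eq_mul]
        _ ≤ _ := sum_le_sum hbound
    · intro X hX Y hY hXY
      simp only [Finset.disjoint_left, mem_image, mem_filter]
      rintro p ⟨a, _, rfl⟩ ⟨b, _, hb⟩
      have hfst := congrArg Prod.fst hb
      simp only at hfst
      exact hXY hfst.symm
  -- upper bound : S.card ≤ Hi.card * (n - i + 1)
  have hup : S.card ≤ Hi.card * (n - i + 1) := by
    have hmaps : ∀ p ∈ S, p.1.erase p.2 ∈ Hi := by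
      intro p hp
      obtain ⟨hX, hx, hnF⟩ := hmemS p hp
      simp only [hGi, mem_filter, mem_univ, true_and] at hX
      simp only [hHi, mem_filter, mem_univ, true_and]
      exact ⟨by rw [card_erase_of_mem hx, hX.1], hnF⟩
    rw [card_eq_sum_card_fiberwise hmaps]
    have hfiber : ∀ Y ∈ Hi, (S.filter fun p => p.1.erase p.2 = Y).card ≤ n - i + 1 := by
      intro Y hY
      simp only [hHi, mem_filter, mem_univ, true_and] at hY
      have hinj : Set.InjOn (fun p : Finset (Fin n) × Fin n => p.2)
          ↑(S.filter fun p => p.1.erase p.2 = Y) := by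
        intro p hp q hq hpq
        simp only [coe_filter, Set.mem_setOf_eq] at hp hq
        obtain ⟨hpS, hpY⟩ := hp
        obtain ⟨hqS, hqY⟩ := hq
        obtain ⟨_, hpx, _⟩ := hmemS p hpS
        obtain ⟨_, hqx, _⟩ := hmemS q hqS
        have h1 : p.1 = insert p.2 (p.1.erase p.2) := (insert_erase hpx).symm
        have h2 : q.1 = insert q.2 (q.1.erase q.2) := (insert_erase hqx).symm
        have : p.1 = q.1 := by
          rw [h1, h2, hpY, hqY]
          exact congrArg (fun x => insert x Y) hpq
        exact Prod.ext this hpq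
      have hsub : ∀ p ∈ (S.filter fun p => p.1.erase p.2 = Y),
          (fun p : Finset (Fin n) × Fin n => p.2) p ∈ Yᶜ := by
        intro p hp
        simp only [mem_filter] at hp
        obtain ⟨_, hpx, _⟩ := hmemS p hp.1
        simp only [mem_compl]
        intro hpy
        rw [← hp.2] at hpy
        exact (notMem_erase p.2 p.1) hpy
      have := Finset.card_le_card_of_injOn _ hsub hinj
      rw [card_compl, hY.1] at this
      simp only [Fintype.card_fin] at this
      omega
    calc ∑ Y ∈ Hi, (S.filter fun p => p.1.erase p.2 = Y).card
        ≤ ∑ _Y ∈ Hi, (n - i + 1) := sum_le_sum hfiber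
      _ = Hi.card * (n - i + 1) := by rw [sum_const, smul_eq_mul]
  exact hlow.trans hup
end

section
/- For all integers n and m with 0 ≤ m < n/2, one has Σ_{i=0}^{m} C(n,i) ≤ ((n-m)/(n-2m))·C(n,m). -/
open Finset

/-! Consecutive binomial coefficients below `m` grow at least by the factor `(n - m) / m`:
`(n - m) C(n, a) ≤ m C(n, a + 1)` for `a < m`. Summing this over `a < m` and shifting the index
gives `(n - m) (S - C(n, m)) ≤ m S` for `S = ∑_{i ≤ m} C(n, i)`, that is `(n - 2m) S ≤ (n - m) C(n, m)`. -/

theorem Nat.sub_mul_choose_le_mul_choose_succ {n m a : ℕ} (ha : a < m) :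
    (n - m) * n.choose a ≤ m * n.choose (a + 1) :=
  calc (n - m) * n.choose a ≤ (n - a) * n.choose a := by gcongr
    _ = n.choose (a + 1) * (a + 1) := by rw [mul_comm, Nat.choose_succ_right_eq]
    _ ≤ m * n.choose (a + 1) := by rw [mul_comm]; gcongr; omega

theorem Finset.tsub_mul_sum_range_succ_le {f : ℕ → ℕ} {c d m : ℕ}
    (hf : ∀ a < m, c * f a ≤ d * f (a + 1)) :
    (c - d) * ∑ i ∈ range (m + 1), f i ≤ c * f m := by
  have hshift : c * ∑ i ∈ range m, f i ≤ d * ∑ i ∈ range m, f (i + 1) := by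
    rw [mul_sum, mul_sum]
    exact sum_le_sum fun a ha ↦ hf a (mem_range.mp ha)
  have hS : c * ∑ i ∈ range (m + 1), f i ≤ d * ∑ i ∈ range (m + 1), f i + c * f m :=
    calc c * ∑ i ∈ range (m + 1), f i = c * ∑ i ∈ range m, f i + c * f m := by
          rw [sum_range_succ, mul_add]
      _ ≤ d * ∑ i ∈ range m, f (i + 1) + c * f m := by gcongr
      _ ≤ d * (∑ i ∈ range m, f (i + 1) + f 0) + c * f m := by gcongr; exact le_self_add
      _ = d * ∑ i ∈ range (m + 1), f i + c * f m := by rw [sum_range_succ']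
  rw [tsub_mul, tsub_le_iff_right]
  linarith

theorem Nat.sub_two_mul_mul_sum_choose_le (n m : ℕ) :
    (n - 2 * m) * ∑ i ∈ range (m + 1), n.choose i ≤ (n - m) * n.choose m := by
  have h := tsub_mul_sum_range_succ_le (f := n.choose) (c := n - m) (d := m)
    fun _ ↦ Nat.sub_mul_choose_le_mul_choose_succ
  rwa [show n - m - m = n - 2 * m by omega] at h

/-- for all integers `n`, `m` with `0 ≤ m < n/2`,
`Σ_{i=0}^{m} C(n,i) ≤ ((n-m)/(n-2m))·C(n,m)`. -/
theorem stmt15 (n m : ℕ) (h : 2 * m < n) :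
    (∑ i ∈ Finset.range (m + 1), (n.choose i : ℝ)) ≤
      (((n : ℝ) - m) / ((n : ℝ) - 2 * m)) * (n.choose m : ℝ) := by
  have hpos : (0 : ℝ) < n - 2 * m := by
    rw [sub_pos]; exact_mod_cast h
  have hreal : ((n : ℝ) - 2 * m) * ∑ i ∈ range (m + 1), (n.choose i : ℝ) ≤
      ((n : ℝ) - m) * n.choose m := by
    have := (Nat.cast_le (α := ℝ)).mpr (Nat.sub_two_mul_mul_sum_choose_le n m)
    push_cast [Nat.cast_sub h.le, Nat.cast_sub (by omega : m ≤ n)] at this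
    exact this
  rw [div_mul_eq_mul_div, le_div_iff₀ hpos, mul_comm]
  exact hreal
end

section
/- Let G be a finite simple graph with chromatic number at least 3. Then there exist constants c, C > 0 (depending only on G) and n_0 such that for all n ≥ n_0: c·C(n, emb(n,G)) ≤ 2^n - vex(n, G) ≤ C·C(n, emb(n,G)). -/
open Finset

/-- The Kneser cube: the simple graph on all subsets of `[n]`, with two distinct
sets adjacent iff they are disjoint. -/
def kneserCube (n : ℕ) : SimpleGraph (Finset (Fin n)) where
  Adj A B := A ≠ B ∧ Disjoint A B
  symm := ⟨fun _ _ h => ⟨h.1.symm, h.2.symm⟩⟩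
  loopless := ⟨fun _ h => h.1 rfl⟩

/-- The Kneser graph `Kn(n, m)`: the simple graph on all `m`-element subsets of `[n]`,
with two distinct sets adjacent iff they are disjoint. -/
def kneserGraph (n m : ℕ) : SimpleGraph {A : Finset (Fin n) // A.card = m} where
  Adj A B := A ≠ B ∧ Disjoint A.1 B.1
  symm := ⟨fun _ _ h => ⟨h.1.symm, h.2.symm⟩⟩
  loopless := ⟨fun _ h => h.1 rfl⟩

/-- `H` contains a subgraph isomorphic to `G`, i.e. there is an injective graph
homomorphism from `G` into `H`. -/
def hasCopy {V W : Type*} (G : SimpleGraph V) (H : SimpleGraph W) : Prop :=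
  ∃ f : V → W, Function.Injective f ∧ ∀ a b, G.Adj a b → H.Adj (f a) (f b)

/-- A family `F` of subsets of `[n]` is `G`-free if the subgraph of the Kneser cube
induced on `F` contains no subgraph isomorphic to `G`. -/
def gFree {V : Type*} (G : SimpleGraph V) (n : ℕ) (F : Finset (Finset (Fin n))) : Prop :=
  ¬ ∃ f : V → Finset (Fin n),
      Function.Injective f ∧ (∀ v, f v ∈ F) ∧
        ∀ a b, G.Adj a b → (kneserCube n).Adj (f a) (f b)

/-- `vexG n G` : the maximum size of a `G`-free family of subsets of `[n]`. -/
noncomputable def vexG {V : Type*} (n : ℕ) (G : SimpleGraph V) : ℕ :=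
  sSup {k | ∃ F : Finset (Finset (Fin n)), gFree G n F ∧ F.card = k}

/-- `emb n G` : the maximum `m` such that the Kneser graph `Kn(n, m)` contains a
subgraph isomorphic to `G`. -/
noncomputable def emb {V : Type*} (n : ℕ) (G : SimpleGraph V) : ℕ :=
  sSup {m | hasCopy G (kneserGraph n m)}

/-!
An odd closed walk of length `2l + 1` exists since `χ(G) ≥ 3`. Along it consecutive sets of a
copy of `G` in `Kn(n, e)` are disjoint, so each point of `[n]` lies in at most `l` of them and
`(2l + 1) e ≤ l n`. Below `e = emb(n, G)` the binomial coefficients therefore decay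
geometrically with ratio `l / (l + 1)`. The family of all sets of size `> e` is `G`-free, since
a copy in it could be shrunk to a copy in `Kn(n, e + 1)`; it misses at most `(l + 1) C(n, e)`
sets. Conversely a `G`-free family misses a set of every image of a fixed copy in `Kn(n, e)`
under `Sym(n)`, and averaging over `Sym(n)` shows that it misses at least `C(n, e) / |V|` sets.
-/

open Function

section OddCycle

variable {l : ℕ}

theorem card_le_of_add_one_notMem {I : Finset (Fin (2 * l + 1))} (hI : ∀ i ∈ I, i + 1 ∉ I) :
    #I ≤ l := by
  have hdisj : Disjoint (I.map (addRightEmbedding 1)) I := by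
    refine disjoint_left.2 fun j hj hjI => ?_
    obtain ⟨i, hi, rfl⟩ := mem_map.1 hj
    exact hI i hi hjI
  have := card_le_univ (I.map (addRightEmbedding 1) ∪ I)
  rw [card_union_of_disjoint hdisj, card_map, Fintype.card_fin] at this
  omega

theorem mul_le_card_mul_of_disjoint_add_one {β : Type*} [Fintype β] {m : ℕ}
    (A : Fin (2 * l + 1) → Finset β) (hcard : ∀ i, m ≤ #(A i))
    (hdisj : ∀ i, Disjoint (A i) (A (i + 1))) :
    (2 * l + 1) * m ≤ Fintype.card β * l := by
  classical
  simpa using card_mul_le_card_mul (fun i x => x ∈ A i) (s := univ) (t := univ)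
    (fun i _ => by simpa [bipartiteAbove] using hcard i)
    (fun x _ => card_le_of_add_one_notMem fun i hi hi' => by
      simp only [bipartiteBelow, mem_filter, mem_univ, true_and] at hi hi'
      exact disjoint_left.1 (hdisj i) hi hi')

theorem SimpleGraph.Walk.mul_le_of_forall_adj_kneserGraph {V : Type*} {G : SimpleGraph V}
    {v : V} (w : G.Walk v v) (hw : w.length = 2 * l + 1) {n m : ℕ}
    (f : V → {A : Finset (Fin n) // #A = m})
    (hf : ∀ a b, G.Adj a b → (kneserGraph n m).Adj (f a) (f b)) :
    (2 * l + 1) * m ≤ n * l := by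
  have hstep (i : Fin (2 * l + 1)) :
      w.getVert (i + 1 : Fin (2 * l + 1)) = w.getVert (i + 1) := by
    rw [Fin.val_add_one]
    split_ifs with h
    · rw [h, Fin.val_last, ← hw, w.getVert_length, w.getVert_zero]
    · rfl
  simpa using mul_le_card_mul_of_disjoint_add_one (fun i => (f (w.getVert i)).1)
    (fun i => (f _).2.ge)
    (fun i => by rw [hstep]; exact (hf _ _ (w.adj_getVert_succ (by omega))).2)

end OddCycle

theorem sum_range_le_mul_of_forall_mul_le {a : ℕ → ℕ} {q e : ℕ}
    (h : ∀ i < e, (q + 1) * a i ≤ q * a (i + 1)) :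
    ∑ i ∈ range (e + 1), a i ≤ (q + 1) * a e := by
  induction e with
  | zero => simpa using Nat.le_mul_of_pos_left (a 0) q.succ_pos
  | succ e ih =>
    rw [sum_range_succ]
    have := ih fun i hi => h i (by omega)
    have := h e (by omega)
    linarith

theorem Nat.succ_mul_choose_le_mul_choose_succ {n l i : ℕ} (h : (2 * l + 1) * (i + 1) ≤ n * l) :
    (l + 1) * n.choose i ≤ l * n.choose (i + 1) := by
  have hin : i < n := by nlinarith
  have hkey : (l + 1) * (i + 1) ≤ l * (n - i) := by
    zify [hin.le] at h ⊢
    nlinarith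
  refine Nat.le_of_mul_le_mul_right ?_ i.succ_pos
  calc (l + 1) * n.choose i * (i + 1) = n.choose i * ((l + 1) * (i + 1)) := by ring
    _ ≤ n.choose i * (l * (n - i)) := Nat.mul_le_mul_left _ hkey
    _ = l * n.choose (i + 1) * (i + 1) := by rw [mul_assoc, Nat.choose_succ_right_eq]; ring

theorem card_filter_card_le {α : Type*} [Fintype α] (e : ℕ) :
    #{A : Finset α | #A ≤ e} = ∑ i ∈ range (e + 1), (Fintype.card α).choose i := by
  rw [card_eq_sum_card_fiberwise (f := card) (t := range (e + 1))
    fun A hA => mem_range.2 (Nat.lt_succ_of_le (mem_filter.1 hA).2)]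
  refine sum_congr rfl fun i hi => ?_
  rw [← card_univ, ← card_powersetCard]
  congr 1
  ext A
  simp only [mem_filter, mem_univ, true_and, mem_powersetCard_univ, mem_range] at hi ⊢
  omega

section Shrink

variable {V α : Type*} [Fintype V] [DecidableEq V] [DecidableEq α]

theorem exists_injective_update_erase {f : V → Finset α} (hf : Injective f) {v : V}
    (hv : Fintype.card V < #(f v)) : ∃ x ∈ f v, Injective (update f v ((f v).erase x)) := by
  -- the `#(f v)` sets `(f v).erase x` are distinct, and only `card V - 1` are other values of `f`
  have hlt : #((univ.erase v).image f) < #((f v).image (f v).erase) := by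
    rw [card_image_of_injOn (erase_injOn _)]
    calc #((univ.erase v).image f) ≤ #(univ.erase v) := card_image_le
      _ < #(f v) := by rw [card_erase_of_mem (mem_univ v), card_univ]; omega
  obtain ⟨_, hmem, hnew⟩ := exists_mem_notMem_of_card_lt_card hlt
  obtain ⟨x, hx, rfl⟩ := mem_image.1 hmem
  have hfresh : ∀ u ≠ v, f u ≠ (f v).erase x := fun u hu he =>
    hnew (mem_image.2 ⟨u, mem_erase.2 ⟨hu, mem_univ u⟩, he⟩)
  refine ⟨x, hx, fun a b hab => ?_⟩
  by_cases ha : a = v <;> by_cases hb : b = v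
  · rw [ha, hb]
  · subst ha; simp only [update_self, update_of_ne hb] at hab; exact absurd hab.symm (hfresh b hb)
  · subst hb; simp only [update_self, update_of_ne ha] at hab; exact absurd hab (hfresh a ha)
  · rw [update_of_ne ha, update_of_ne hb] at hab; exact hf hab

theorem exists_injective_subset_card_eq {s : ℕ} (hs : Fintype.card V ≤ s) (f : V → Finset α)
    (hf : Injective f) (hcard : ∀ v, s ≤ #(f v)) :
    ∃ g : V → Finset α, Injective g ∧ ∀ v, g v ⊆ f v ∧ #(g v) = s := by
  induction h : ∑ v, #(f v) using Nat.strong_induction_on generalizing f with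
  | _ N ih =>
    by_cases hall : ∀ v, #(f v) = s
    · exact ⟨f, hf, fun v => ⟨subset_rfl, hall v⟩⟩
    push Not at hall
    obtain ⟨v, hv⟩ := hall
    obtain ⟨x, hx, hinj⟩ := exists_injective_update_erase hf (v := v)
      (by have := hcard v; omega)
    set f' := update f v ((f v).erase x)
    have hsub (u : V) : f' u ⊆ f u := by
      by_cases hu : u = v
      · subst hu; simpa [f'] using erase_subset x (f u)
      · simp [f', update_of_ne hu]
    have hcard_v : #(f' v) + 1 = #(f v) := by simp [f', card_erase_add_one hx]
    have hlt : ∑ u, #(f' u) < N := h ▸ sum_lt_sum (fun u _ => card_le_card (hsub u))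
      ⟨v, mem_univ v, by omega⟩
    obtain ⟨g, hg, hgf⟩ := ih _ hlt f' hinj (fun u => by
      by_cases hu : u = v
      · subst hu; have := hcard u; omega
      · simpa [f', update_of_ne hu] using hcard u) rfl
    exact ⟨g, hg, fun u => ⟨(hgf u).1.trans (hsub u), (hgf u).2⟩⟩

end Shrink

section Extremal

variable {V : Type*} (G : SimpleGraph V) {n m : ℕ}

theorem hasCopy_kneserGraph_of_card_mul_le [Fintype V] (hm : 0 < m)
    (h : Fintype.card V * m ≤ n) :
    hasCopy G (kneserGraph n m) := by
  obtain ⟨φ⟩ : Nonempty (V × Fin m ↪ Fin n) :=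
    Function.Embedding.nonempty_of_card_le (by simpa using h)
  let B (v : V) : Finset (Fin n) := univ.map ⟨fun t => φ (v, t), fun s t hst => by
    simpa using φ.injective hst⟩
  have hdisj {u v : V} (huv : u ≠ v) : Disjoint (B u) (B v) := by
    simp only [B, disjoint_left, mem_map, mem_univ, true_and]
    rintro _ ⟨s, rfl⟩ ⟨t, hts⟩
    exact huv (congrArg Prod.fst (φ.injective hts)).symm
  have hinj : Injective B := fun u v huv => by
    by_contra hne
    have hd := hdisj hne
    rw [huv, disjoint_self] at hd
    exact (Finset.Nonempty.map (univ_nonempty_iff.2 ⟨⟨0, hm⟩⟩)).ne_empty hd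
  refine ⟨fun v => ⟨B v, by simp [B]⟩, fun u v huv => hinj (congrArg Subtype.val huv),
    fun a b hab => ⟨fun he => hab.ne (hinj (congrArg Subtype.val he)), hdisj hab.ne⟩⟩

variable {G}

theorem le_of_hasCopy_kneserGraph [Nonempty V] (h : hasCopy G (kneserGraph n m)) : m ≤ n := by
  obtain ⟨f, -, -⟩ := h
  have := card_le_univ (f (Classical.arbitrary V)).1
  rwa [(f _).2, Fintype.card_fin] at this

theorem le_emb [Nonempty V] (h : hasCopy G (kneserGraph n m)) : m ≤ emb n G :=
  le_csSup ⟨n, fun _ => le_of_hasCopy_kneserGraph⟩ h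

theorem hasCopy_emb [Nonempty V] (h : hasCopy G (kneserGraph n m)) :
    hasCopy G (kneserGraph n (emb n G)) :=
  Nat.sSup_mem ⟨m, h⟩ ⟨n, fun _ => le_of_hasCopy_kneserGraph⟩

theorem bddAbove_card_gFree :
    BddAbove {k | ∃ F : Finset (Finset (Fin n)), gFree G n F ∧ #F = k} := by
  refine ⟨2 ^ n, ?_⟩
  rintro _ ⟨F, -, rfl⟩
  simpa using card_le_univ F

theorem card_le_vexG {F : Finset (Finset (Fin n))} (hF : gFree G n F) : #F ≤ vexG n G :=
  le_csSup bddAbove_card_gFree ⟨F, hF, rfl⟩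

theorem exists_gFree_card_eq_vexG [Nonempty V] :
    ∃ F : Finset (Finset (Fin n)), gFree G n F ∧ #F = vexG n G := by
  refine Nat.sSup_mem (s := {k | ∃ F : Finset (Finset (Fin n)), gFree G n F ∧ #F = k})
    ⟨0, ∅, ?_, rfl⟩ bddAbove_card_gFree
  rintro ⟨f, -, hf, -⟩
  exact notMem_empty _ (hf (Classical.arbitrary V))

theorem gFree_filter_le_card [Fintype V] [DecidableEq V] (hV : Fintype.card V ≤ m)
    (hm : ¬ hasCopy G (kneserGraph n m)) : gFree G n {A | m ≤ #A} := by
  rintro ⟨f, hf, hmem, hadj⟩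
  obtain ⟨g, hg, hgf⟩ := exists_injective_subset_card_eq hV f hf fun v => by
    simpa using hmem v
  refine hm ⟨fun v => ⟨g v, (hgf v).2⟩, fun u v huv => hg (congrArg Subtype.val huv),
    fun a b hab => ⟨fun he => hab.ne (hg (congrArg Subtype.val he)), ?_⟩⟩
  exact (hadj a b hab).2.mono (hgf a).1 (hgf b).1

end Extremal

section Permutations

open Equiv MulAction
open scoped Pointwise Nat

theorem card_perm_smul_eq_mul_choose_le {α : Type*} [Fintype α] [DecidableEq α]
    (B A : Finset α) :
    #{σ : Perm α | σ • B = A} * (Fintype.card α).choose #B ≤ (Fintype.card α)! := by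
  let B' : Set.powersetCard α #B := ⟨B, rfl⟩
  have : IsPretransitive (Perm α) (Set.powersetCard α #B) := Set.powersetCard.isPretransitive
  have horbit : Nat.card (stabilizer (Perm α) B') * (Fintype.card α).choose #B =
      (Fintype.card α)! := by
    rw [← Nat.card_eq_fintype_card, ← Set.powersetCard.card,
      ← index_stabilizer_of_transitive (Perm α) B', Subgroup.card_mul_index, Nat.card_perm]
  rcases (univ.filter fun σ : Perm α => σ • B = A).eq_empty_or_nonempty with h | ⟨σ₀, hσ₀⟩
  · simp [h]
  rw [← horbit]
  gcongr
  rw [← Nat.card_eq_finsetCard]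
  refine Nat.card_le_card_of_injective (fun σ => ⟨σ₀⁻¹ * σ.1, ?_⟩) fun σ τ hστ => ?_
  · rw [mem_stabilizer_iff, ← Subtype.coe_inj, Set.powersetCard.coe_smul, mul_smul,
      (mem_filter.1 σ.2).2, ← (mem_filter.1 hσ₀).2, inv_smul_smul]
  · exact Subtype.ext (mul_left_cancel (congrArg Subtype.val hστ))

theorem choose_le_card_mul_card_filter_notMem {V : Type*} [Fintype V] {G : SimpleGraph V}
    {n e : ℕ} (hcopy : hasCopy G (kneserGraph n e)) {F : Finset (Finset (Fin n))}
    (hF : gFree G n F) :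
    n.choose e ≤ Fintype.card V * #{A : Finset (Fin n) | #A = e ∧ A ∉ F} := by
  obtain ⟨f, hf, hadj⟩ := hcopy
  set D : Finset (Finset (Fin n)) := {A | #A = e ∧ A ∉ F}
  have hcover (σ : Perm (Fin n)) : ∃ v, σ • (f v).1 ∈ D := by
    by_contra! h
    refine hF ⟨fun v => σ • (f v).1, fun u v huv => hf (Subtype.ext (MulAction.injective σ huv)),
      fun v => ?_, fun a b hab => ?_⟩
    · simpa [D, card_smul_finset, (f v).2] using h v
    · obtain ⟨hne, hdisj⟩ := hadj a b hab
      refine ⟨fun he => hne (Subtype.ext (MulAction.injective σ he)), ?_⟩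
      simpa only [smul_finset_def, Perm.smul_def] using (disjoint_image σ.injective).2 hdisj
  have hfiber (v : V) :
      #{σ : Perm (Fin n) | σ • (f v).1 ∈ D} * n.choose e ≤ #D * n ! := by
    rw [card_eq_sum_card_fiberwise (f := fun σ => σ • (f v).1) (t := D)
      (s := {σ : Perm (Fin n) | σ • (f v).1 ∈ D}) fun σ hσ => (mem_filter.1 hσ).2, sum_mul,
      ← smul_eq_mul, ← sum_const]
    refine sum_le_sum fun A _ => ?_
    have := card_perm_smul_eq_mul_choose_le (f v).1 A
    simp only [Fintype.card_fin, (f v).2] at this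
    refine le_trans (Nat.mul_le_mul_right _ (card_le_card fun σ hσ => ?_)) this
    simp only [mem_filter] at hσ ⊢
    exact ⟨hσ.1.1, hσ.2⟩
  have hcount : n ! * n.choose e ≤ n ! * (Fintype.card V * #D) :=
    calc n ! * n.choose e = #(univ : Finset (Perm (Fin n))) * n.choose e := by
          rw [card_univ, Fintype.card_perm, Fintype.card_fin]
      _ ≤ (∑ v, #{σ : Perm (Fin n) | σ • (f v).1 ∈ D}) * n.choose e := by
        gcongr
        refine le_trans (card_le_card fun σ _ => ?_) card_biUnion_le
        obtain ⟨v, hv⟩ := hcover σ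
        exact mem_biUnion.2 ⟨v, mem_univ v, mem_filter.2 ⟨mem_univ σ, hv⟩⟩
      _ ≤ ∑ _v : V, #D * n ! := by rw [sum_mul]; exact sum_le_sum fun v _ => hfiber v
      _ = n ! * (Fintype.card V * #D) := by simp [card_univ]; ring
  exact Nat.le_of_mul_le_mul_left hcount (Nat.factorial_pos n)

end Permutations

section Bounds

variable {V : Type*} [Fintype V] [Nonempty V] {G : SimpleGraph V} {n : ℕ}

theorem choose_add_card_mul_vexG_le {e : ℕ} (h : hasCopy G (kneserGraph n e)) :
    n.choose e + Fintype.card V * vexG n G ≤ Fintype.card V * 2 ^ n := by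
  obtain ⟨F, hF, hcard⟩ := exists_gFree_card_eq_vexG (G := G) (n := n)
  set D : Finset (Finset (Fin n)) := {A | #A = e ∧ A ∉ F}
  have hDF : #D + #F ≤ 2 ^ n := by
    have hdisj : Disjoint D F := disjoint_left.2 fun A hA => (mem_filter.1 hA).2.2
    simpa [card_union_of_disjoint hdisj] using card_le_univ (D ∪ F)
  have hD : n.choose e ≤ Fintype.card V * #D := choose_le_card_mul_card_filter_notMem h hF
  rw [← hcard]
  calc n.choose e + Fintype.card V * #F ≤ Fintype.card V * (#D + #F) := by rw [mul_add]; omega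
    _ ≤ Fintype.card V * 2 ^ n := Nat.mul_le_mul_left _ hDF

theorem two_pow_le_vexG_add_sum_choose (hV : Fintype.card V ≤ emb n G + 1) :
    2 ^ n ≤ vexG n G + ∑ i ∈ range (emb n G + 1), n.choose i := by
  classical
  have hfree : gFree G n {A | emb n G + 1 ≤ #A} :=
    gFree_filter_le_card hV fun h => by simpa using le_emb h
  have hsplit := card_filter_add_card_filter_not (s := (univ : Finset (Finset (Fin n))))
    fun A => emb n G + 1 ≤ #A
  have hlow := card_filter_card_le (α := Fin n) (emb n G)
  simp only [not_le, Nat.lt_succ_iff, card_univ, Fintype.card_finset, Fintype.card_fin]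
    at hsplit hlow
  have := card_le_vexG hfree
  omega

end Bounds

/-- for a finite simple graph `G` with chromatic number at least `3`,
`2^n - vex(n, G) = Θ_G(C(n, emb(n,G)))`. -/
theorem stmt16 {V : Type*} [Fintype V] (G : SimpleGraph V)
    (hchi : 3 ≤ G.chromaticNumber) :
    ∃ c C : ℝ, 0 < c ∧ 0 < C ∧ ∃ n₀ : ℕ, ∀ n : ℕ, n₀ ≤ n →
      c * (n.choose (emb n G) : ℝ) ≤ (2 : ℝ) ^ n - (vexG n G : ℝ) ∧
        (2 : ℝ) ^ n - (vexG n G : ℝ) ≤ C * (n.choose (emb n G) : ℝ) := by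
  have hbip : ¬ G.Colorable 2 := fun h => by
    have := hchi.trans h.chromaticNumber_le
    norm_num at this
  simp only [SimpleGraph.two_colorable_iff_forall_loop_even, not_forall,
    Nat.not_even_iff_odd] at hbip
  obtain ⟨v, w, l, hw⟩ := hbip
  have : Nonempty V := ⟨v⟩
  set k := Fintype.card V
  have hk : 0 < k := Fintype.card_pos
  -- `n ≥ k²` leaves room for `k` disjoint `k`-sets, so `emb n G ≥ k`, as the shrinking needs.
  refine ⟨1 / k, l + 1, by positivity, by positivity, k * k, fun n hn => ?_⟩
  have hcopy : hasCopy G (kneserGraph n k) := hasCopy_kneserGraph_of_card_mul_le G hk hn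
  have hke : k ≤ emb n G := le_emb hcopy
  obtain ⟨f, -, hf⟩ := hasCopy_emb hcopy
  have hratio := w.mul_le_of_forall_adj_kneserGraph hw f hf
  have hgeom : ∑ i ∈ range (emb n G + 1), n.choose i ≤ (l + 1) * n.choose (emb n G) :=
    sum_range_le_mul_of_forall_mul_le fun i hi =>
      Nat.succ_mul_choose_le_mul_choose_succ ((Nat.mul_le_mul_left _ hi).trans hratio)
  have hlow : (n.choose (emb n G) + k * vexG n G : ℝ) ≤ k * 2 ^ n := by
    exact_mod_cast choose_add_card_mul_vexG_le (hasCopy_emb hcopy)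
  have hup : (2 ^ n : ℝ) ≤ vexG n G + (l + 1) * n.choose (emb n G) := by
    exact_mod_cast (two_pow_le_vexG_add_sum_choose (G := G) (by omega)).trans
      (Nat.add_le_add_left hgeom _)
  refine ⟨?_, by linarith⟩
  rw [one_div, inv_mul_le_iff₀ (by positivity)]
  linarith
end
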